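/- arXiv:math/0311447 — 4 statements merged into one kernel-verified Lean document; each statement's English description precedes it below -/
import Mathlib

section
/- Let k be a field and let f ∈ k[x_0, x_1, x_2, x_3] be homogeneous of degree d. Suppose that for each i ∈ {0,1,2,3}, f has multiplicity at least m_i at the coordinate point e_i, where m_0, m_1, m_2, m_3 are natural numbers. Let g = f(x_1x_2x_3, x_0x_2x_3, x_0x_1x_3, x_0x_1x_2) be the result of substituting for each variable x_i the product of the other three variables. Then the monomial x_0^{m_0} x_1^{m_1} x_2^{m_2} x_3^{m_3} divides g in k[x_0, x_1, x_2, x_3]. -/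
/-!
Under the substitution `x_i ↦ ∏_{j ≠ i} x_j` a monomial `x^a` becomes `∏_j x_j^(|a| - a_j)`,
since `x_j` occurs in the image of every `x_i` with `i ≠ j`. For `f` homogeneous of degree `d`
every monomial has `|a| = d`, and multiplicity at least `m_j` at `e_j` says exactly
`m_j ≤ d - a_j`, so `∏_j x_j^(m_j)` divides the image of each monomial of `f`.
-/

open MvPolynomial

namespace MvPolynomial

variable {σ R : Type*} [Fintype σ] [DecidableEq σ] [CommSemiring R]

theorem sum_erase_eq_degree_sub (a : σ →₀ ℕ) (j : σ) :
    ∑ i ∈ Finset.univ.erase j, a i = a.degree - a j := by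
  have h := Finset.add_sum_erase Finset.univ a (Finset.mem_univ j)
  rw [Finsupp.degree_eq_sum]
  omega

theorem bind₁_prod_erase_monomial (a : σ →₀ ℕ) (c : R) :
    bind₁ (fun i => ∏ j ∈ Finset.univ.erase i, (X j : MvPolynomial σ R)) (monomial a c) =
      C c * ∏ j, X j ^ (a.degree - a j) := by
  rw [bind₁_monomial]
  congr 1
  calc ∏ i ∈ a.support, (∏ j ∈ Finset.univ.erase i, (X j : MvPolynomial σ R)) ^ a i
      = ∏ i, (∏ j ∈ Finset.univ.erase i, (X j : MvPolynomial σ R)) ^ a i :=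
        Finset.prod_subset (Finset.subset_univ _) fun i _ hi => by
          rw [Finsupp.notMem_support_iff.mp hi, pow_zero]
    _ = ∏ i, ∏ j ∈ Finset.univ.erase i, (X j : MvPolynomial σ R) ^ a i := by
        simp only [Finset.prod_pow]
    _ = ∏ j, ∏ i ∈ Finset.univ.erase j, (X j : MvPolynomial σ R) ^ a i :=
        Finset.prod_comm' (by simp [ne_comm])
    _ = ∏ j, X j ^ (a.degree - a j) := by
        simp only [Finset.prod_pow_eq_pow_sum, sum_erase_eq_degree_sub]

theorem prod_X_pow_dvd_bind₁_prod_erase {f : MvPolynomial σ R} {m : σ → ℕ}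
    (hm : ∀ j, ∀ a ∈ f.support, m j ≤ a.degree - a j) :
    (∏ j, (X j : MvPolynomial σ R) ^ m j) ∣
      bind₁ (fun i => ∏ j ∈ Finset.univ.erase i, X j) f := by
  rw [f.as_sum, map_sum]
  refine Finset.dvd_sum fun a ha => ?_
  rw [bind₁_prod_erase_monomial]
  exact Dvd.dvd.mul_left
    (Finset.prod_dvd_prod_of_dvd _ _ fun j _ => pow_dvd_pow _ (hm j a ha)) _

end MvPolynomial

/-- If `f` is homogeneous of degree `d` with multiplicity at least `m i` at the `i`-th
coordinate point (i.e. every exponent `a` in the support of `f` satisfies `d - a i ≥ m i`),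
then after the cubic Cremona substitution `x_i ↦ ∏_{j ≠ i} x_j` the result is divisible
by `x_0^{m_0} x_1^{m_1} x_2^{m_2} x_3^{m_3}`. -/
theorem cremona_substitution_divisible
    (k : Type*) [Field k] (d : ℕ) (m : Fin 4 → ℕ)
    (f : MvPolynomial (Fin 4) k) (hf : f.IsHomogeneous d)
    (hmult : ∀ i : Fin 4, ∀ a ∈ f.support, a i + m i ≤ d) :
    (∏ i : Fin 4, (X i : MvPolynomial (Fin 4) k) ^ m i) ∣
      MvPolynomial.bind₁ (fun i : Fin 4 => ∏ j ∈ Finset.univ.erase i, X j) f := by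
  refine prod_X_pow_dvd_bind₁_prod_erase fun j a ha => ?_
  have hdeg : a.degree = d := by
    rw [Finsupp.degree_eq_weight_one]
    exact hf (mem_support_iff.mp ha)
  have := hmult j a ha
  omega
end

section
/- Let d, m_1, …, m_r (r ≥ 4) be natural numbers with m_i ≤ d for i = 1, 2, 3, 4 and 2d ≥ m_i + m_j + m_l for every three-element subset {i,j,l} ⊆ {1,2,3,4}. Set k = 2d − (m_1 + m_2 + m_3 + m_4) and t_{ij} = m_i + m_j − d for 1 ≤ i < j ≤ 4, and define the virtual dimensions v = C(d+3,3) − Σ_{i=1}^{r} C(m_i+2,3) − 1 and v' = C(d+k+3,3) − Σ_{i=1}^{4} C(m_i+k+2,3) − Σ_{i=5}^{r} C(m_i+2,3) − 1. Then v' − v = Σ_{1 ≤ i < j ≤ 4, t_{ij} ≥ 2} C(1 + t_{ij}, 3) − Σ_{1 ≤ i < j ≤ 4, t_{ij} ≤ −2} C(1 − t_{ij}, 3). -/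
/-!
Since `6 * C(n,3) = n(n-1)(n-2)` for every integer `n`, after multiplying by `6` and substituting
`k = 2d - (m₁ + m₂ + m₃ + m₄)` the identity `v' - v = ∑_{i<j} C(1 + t_{ij}, 3)` is a polynomial
identity in `d, m₁, …, m₄`; the points beyond the fourth cancel. The two-sided right-hand side
of the theorem is this sum in disguise: `C(1 + t, 3)` vanishes for `|t| ≤ 1`, and
`C(2 - n, 3) = -C(n, 3)` turns `-C(1 - t, 3)` into `C(1 + t, 3)` for `t ≤ -2`.
-/

def intChoose3 (n : ℤ) : ℤ := n * (n - 1) * (n - 2) / 6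

theorem six_dvd_mul_sub_one_mul_sub_two (n : ℤ) : (6 : ℤ) ∣ n * (n - 1) * (n - 2) := by
  have h : ∀ x : ZMod 6, x * (x - 1) * (x - 2) = 0 := by decide
  apply (ZMod.intCast_zmod_eq_zero_iff_dvd _ 6).mp
  push_cast
  exact h _

theorem six_mul_intChoose3 (n : ℤ) : 6 * intChoose3 n = n * (n - 1) * (n - 2) :=
  Int.mul_ediv_cancel' (six_dvd_mul_sub_one_mul_sub_two n)

theorem intChoose3_two_sub (n : ℤ) : intChoose3 (2 - n) = -intChoose3 n := by
  apply mul_left_cancel₀ (by norm_num : (6 : ℤ) ≠ 0)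
  rw [mul_neg, six_mul_intChoose3, six_mul_intChoose3]
  ring

theorem Fin.sum_ite_val_lt {M : Type*} [AddCommMonoid M] {n r : ℕ} (h : n ≤ r)
    (f : Fin r → M) :
    ∑ i : Fin r, (if (i : ℕ) < n then f i else 0) = ∑ j : Fin n, f (Fin.castLE h j) := by
  rw [← Finset.sum_filter]
  refine Eq.trans ?_ (Finset.sum_map _ (Fin.castLEEmb h) f)
  congr 1
  ext i
  simp only [Finset.mem_filter, Finset.mem_univ, true_and, Finset.mem_map]
  exact ⟨fun hi => ⟨⟨i, hi⟩, rfl⟩, by rintro ⟨j, rfl⟩; exact j.isLt⟩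

theorem sum_filter_fst_lt_snd_fin_four {M : Type*} [AddCommMonoid M] (f : Fin 4 → Fin 4 → M) :
    ∑ p ∈ Finset.univ.filter (fun p : Fin 4 × Fin 4 => p.1 < p.2), f p.1 p.2 =
      f 0 1 + f 0 2 + f 0 3 + f 1 2 + f 1 3 + f 2 3 := by
  rw [Finset.sum_filter, Fintype.sum_prod_type]
  simp only [Fin.sum_univ_four, Fin.reduceLT, ↓reduceIte, add_zero, zero_add]
  abel

theorem ite_sub_ite_eq_intChoose3_one_add (t : ℤ) :
    ((if 2 ≤ t then intChoose3 (1 + t) else 0) - if t ≤ -2 then intChoose3 (1 - t) else 0) =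
      intChoose3 (1 + t) := by
  split_ifs
  · omega
  · exact sub_zero _
  · rw [zero_sub, ← intChoose3_two_sub]
    ring_nf
  · obtain rfl | rfl | rfl : t = -1 ∨ t = 0 ∨ t = 1 := by omega
    all_goals rfl

theorem intChoose3_cubic_cremona (d k : ℤ) (m : Fin 4 → ℤ) (hk : k = 2 * d - ∑ i, m i) :
    intChoose3 (d + k + 3) - intChoose3 (d + 3) -
        ∑ i, (intChoose3 (m i + k + 2) - intChoose3 (m i + 2)) =
      ∑ p ∈ Finset.univ.filter (fun p : Fin 4 × Fin 4 => p.1 < p.2),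
        intChoose3 (1 + (m p.1 + m p.2 - d)) := by
  rw [sum_filter_fst_lt_snd_fin_four (fun i j => intChoose3 (1 + (m i + m j - d)))]
  rw [Fin.sum_univ_four] at hk ⊢
  subst hk
  apply mul_left_cancel₀ (by norm_num : (6 : ℤ) ≠ 0)
  simp only [mul_add, mul_sub, six_mul_intChoose3]
  ring

theorem virtual_dimension_change_general
    (r : ℕ) (hr : 4 ≤ r) (d : ℕ) (m : Fin r → ℕ) :
    let k : ℤ := 2 * d - ∑ i : Fin 4, (m (Fin.castLE hr i) : ℤ)
    let t : Fin 4 → Fin 4 → ℤ :=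
      fun i j => (m (Fin.castLE hr i) : ℤ) + m (Fin.castLE hr j) - d
    let v : ℤ := intChoose3 ((d : ℤ) + 3) - ∑ i : Fin r, intChoose3 ((m i : ℤ) + 2) - 1
    let v' : ℤ := intChoose3 ((d : ℤ) + k + 3) -
      (∑ i : Fin r, if (i : ℕ) < 4 then intChoose3 ((m i : ℤ) + k + 2)
        else intChoose3 ((m i : ℤ) + 2)) - 1
    v' - v =
      ∑ p ∈ Finset.univ.filter (fun p : Fin 4 × Fin 4 => p.1 < p.2),
        ((if 2 ≤ t p.1 p.2 then intChoose3 (1 + t p.1 p.2) else 0) -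
          (if t p.1 p.2 ≤ -2 then intChoose3 (1 - t p.1 p.2) else 0)) := by
  intro k t v v'
  have h_first_four :
      (∑ i : Fin r, if (i : ℕ) < 4 then intChoose3 ((m i : ℤ) + k + 2)
        else intChoose3 ((m i : ℤ) + 2)) - ∑ i : Fin r, intChoose3 ((m i : ℤ) + 2) =
      ∑ j : Fin 4, (intChoose3 ((m (Fin.castLE hr j) : ℤ) + k + 2) -
        intChoose3 ((m (Fin.castLE hr j) : ℤ) + 2)) := by
    rw [← Fin.sum_ite_val_lt hr (fun i => intChoose3 ((m i : ℤ) + k + 2) -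
      intChoose3 ((m i : ℤ) + 2)), ← Finset.sum_sub_distrib]
    refine Finset.sum_congr rfl fun i _ => ?_
    split_ifs <;> ring
  calc v' - v = intChoose3 ((d : ℤ) + k + 3) - intChoose3 ((d : ℤ) + 3) -
        ((∑ i : Fin r, if (i : ℕ) < 4 then intChoose3 ((m i : ℤ) + k + 2)
          else intChoose3 ((m i : ℤ) + 2)) - ∑ i : Fin r, intChoose3 ((m i : ℤ) + 2)) := by
        simp only [v, v']; ring
    _ = ∑ p ∈ Finset.univ.filter (fun p : Fin 4 × Fin 4 => p.1 < p.2),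
          intChoose3 (1 + t p.1 p.2) := by
        rw [h_first_four, intChoose3_cubic_cremona _ k _ rfl]
    _ = _ := by simp only [ite_sub_ite_eq_intChoose3_one_add]

/-- The change of virtual dimension under the cubic Cremona transformation based at the
first four points: `v(Cr(L)) - v(L) = ∑_{t_{ij} ≥ 2} C(1+t_{ij},3) - ∑_{t_{ij} ≤ -2} C(1-t_{ij},3)`
with `t_{ij} = m_i + m_j - d`. -/
theorem virtual_dimension_change
    (r : ℕ) (hr : 4 ≤ r) (d : ℕ) (m : Fin r → ℕ)
    (hm : ∀ i : Fin 4, m (Fin.castLE hr i) ≤ d)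
    (h3 : ∀ i j l : Fin 4, i ≠ j → i ≠ l → j ≠ l →
      (m (Fin.castLE hr i) : ℤ) + m (Fin.castLE hr j) + m (Fin.castLE hr l) ≤ 2 * d) :
    let k : ℤ := 2 * d - ∑ i : Fin 4, (m (Fin.castLE hr i) : ℤ)
    let t : Fin 4 → Fin 4 → ℤ :=
      fun i j => (m (Fin.castLE hr i) : ℤ) + m (Fin.castLE hr j) - d
    let v : ℤ := intChoose3 ((d : ℤ) + 3) - ∑ i : Fin r, intChoose3 ((m i : ℤ) + 2) - 1
    let v' : ℤ := intChoose3 ((d : ℤ) + k + 3) -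
      (∑ i : Fin r, if (i : ℕ) < 4 then intChoose3 ((m i : ℤ) + k + 2)
        else intChoose3 ((m i : ℤ) + 2)) - 1
    v' - v =
      ∑ p ∈ Finset.univ.filter (fun p : Fin 4 × Fin 4 => p.1 < p.2),
        ((if 2 ≤ t p.1 p.2 then intChoose3 (1 + t p.1 p.2) else 0) -
          (if t p.1 p.2 ≤ -2 then intChoose3 (1 - t p.1 p.2) else 0)) :=
  virtual_dimension_change_general r hr d m
end

section
/- Let 4 ≤ b ≤ 8 and let d, m_1, …, m_b be integers with m_1 ≥ m_2 ≥ … ≥ m_b ≥ 0. For 2 ≤ i ≤ b set t_i = m_1 + m_i − d, and assume t_b ≥ 1. Define d' = d − 2m_b + 2t_b − 2 and m_i' = m_i − m_b + t_b − 1 for 1 ≤ i ≤ b. Then: (a) d' = m_1' − 1; (b) m_i' = t_i − 1 ≥ 0 for 2 ≤ i ≤ b; and (c) C(d'+3, 3) − Σ_{i=1}^{b} C(m_i'+2, 3) = − Σ_{i=2}^{b} C(t_i + 1, 3). In particular the Euler characteristic χ(N_b) of the system N_b = L_3(d', m_1', …, m_b') equals −Σ_{i=2}^{b} C(t_i+1,3),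 and since its degree is one less than its largest multiplicity, N_b has no nonzero sections. -/
/-! The residual multiplicities satisfy `m_i' = t_i - 1` and the degree satisfies
`d' = m_1' - 1`, so in `χ = C(d'+3,3) - ∑ C(m_i'+2,3)` the degree term cancels the
first multiplicity term and what remains is `-∑_{i ≥ 2} C(t_i+1,3)`. Nonnegativity of
`m_i' = t_i - 1` comes from `t_i - t_b = m_i - m_b ≥ 0` and `t_b ≥ 1`. -/

open Finset

def eulerChar (b : ℕ) (d : ℤ) (m : ℕ → ℤ) : ℤ :=
  intChoose3 (d + 3) - ∑ i ∈ Icc 1 b, intChoose3 (m i + 2)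

theorem sum_Icc_one_eq_add_sum_Icc_two {M : Type*} [AddCommMonoid M] (f : ℕ → M) {b : ℕ}
    (hb : 1 ≤ b) : ∑ i ∈ Icc 1 b, f i = f 1 + ∑ i ∈ Icc 2 b, f i := by
  rw [← add_sum_Ioc_eq_sum_Icc hb, ← Icc_add_one_left_eq_Ioc]
  rfl

theorem eulerChar_of_eq_sub_one {b : ℕ} (hb : 1 ≤ b) {d : ℤ} {m : ℕ → ℤ} (hd : d = m 1 - 1) :
    eulerChar b d m = -∑ i ∈ Icc 2 b, intChoose3 (m i + 2) := by
  rw [eulerChar, sum_Icc_one_eq_add_sum_Icc_two _ hb, hd, show m 1 - 1 + 3 = m 1 + 2 by ring]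
  abel

theorem euler_characteristic_Nb_general
    (b : ℕ) (hb1 : 4 ≤ b) (d : ℤ) (m : ℕ → ℤ)
    (hsort : ∀ i j : ℕ, 1 ≤ i → i ≤ j → j ≤ b → m j ≤ m i)
    (t : ℕ → ℤ) (ht : ∀ i, 2 ≤ i → i ≤ b → t i = m 1 + m i - d)
    (htb : 1 ≤ t b)
    (d' : ℤ) (hd' : d' = d - 2 * m b + 2 * t b - 2)
    (m' : ℕ → ℤ) (hm' : ∀ i, 1 ≤ i → i ≤ b → m' i = m i - m b + t b - 1) :
    d' = m' 1 - 1 ∧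
    (∀ i, 2 ≤ i → i ≤ b → m' i = t i - 1 ∧ 0 ≤ m' i) ∧
    intChoose3 (d' + 3) - ∑ i ∈ Finset.Icc 1 b, intChoose3 (m' i + 2) =
      -∑ i ∈ Finset.Icc 2 b, intChoose3 (t i + 1) := by
  have htb_eq : t b = m 1 + m b - d := ht b (by omega) le_rfl
  have hdeg : d' = m' 1 - 1 := by
    rw [hd', hm' 1 (by omega) (by omega), htb_eq]; ring
  have hmult : ∀ i, 2 ≤ i → i ≤ b → m' i = t i - 1 ∧ 0 ≤ m' i := by
    intro i h2i hib
    have hmi : m' i = t i - 1 := by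
      rw [hm' i (by omega) hib, ht i h2i hib, htb_eq]; ring
    have hmb : m b ≤ m i := hsort i b (by omega) hib le_rfl
    exact ⟨hmi, by rw [hm' i (by omega) hib]; omega⟩
  refine ⟨hdeg, hmult, ?_⟩
  change eulerChar b d' m' = _
  rw [eulerChar_of_eq_sub_one (by omega) hdeg]
  congr 1
  refine sum_congr rfl fun i hi => ?_
  rw [mem_Icc] at hi
  rw [(hmult i hi.1 hi.2).1, show t i - 1 + 2 = t i + 1 by ring]

/-- Claim 4.4 of the paper about the system `N_b = L_3(d', m_1', …, m_b')` with
`d' = d - 2m_b + 2t_b - 2` and `m_i' = m_i - m_b + t_b - 1`, where `t_i = m_1 + m_i - d`: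
one has `d' = m_1' - 1`, `m_i' = t_i - 1 ≥ 0` for `2 ≤ i ≤ b`, and
`C(d'+3,3) - ∑_{i=1}^b C(m_i'+2,3) = -∑_{i=2}^b C(t_i+1,3)`. -/
theorem euler_characteristic_Nb
    (b : ℕ) (hb1 : 4 ≤ b) (hb2 : b ≤ 8) (d : ℤ) (m : ℕ → ℤ)
    (hsort : ∀ i j : ℕ, 1 ≤ i → i ≤ j → j ≤ b → m j ≤ m i)
    (hpos : 0 ≤ m b)
    (t : ℕ → ℤ) (ht : ∀ i, 2 ≤ i → i ≤ b → t i = m 1 + m i - d)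
    (htb : 1 ≤ t b)
    (d' : ℤ) (hd' : d' = d - 2 * m b + 2 * t b - 2)
    (m' : ℕ → ℤ) (hm' : ∀ i, 1 ≤ i → i ≤ b → m' i = m i - m b + t b - 1) :
    d' = m' 1 - 1 ∧
    (∀ i, 2 ≤ i → i ≤ b → m' i = t i - 1 ∧ 0 ≤ m' i) ∧
    intChoose3 (d' + 3) - ∑ i ∈ Finset.Icc 1 b, intChoose3 (m' i + 2) =
      -∑ i ∈ Finset.Icc 2 b, intChoose3 (t i + 1) :=
  euler_characteristic_Nb_general b hb1 d m hsort t ht htb d' hd' m' hm'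
end

section
/- Let d, m_1, …, m_8 be integers with d ≥ m_1 ≥ m_2 ≥ … ≥ m_8 ≥ 0, 2d ≥ m_1 + m_2 + m_3 + m_4, and d < m_2 + m_3. Consider the plane system obtained from L_2(2d − m_1, (d−m_1)^2, m_2, …, m_8) by the quadratic Cremona transformation based at its three largest multiplicities d−m_1, m_2, m_3, namely the system with degree δ' = 3d − m_1 − m_2 − m_3 and multiplicity list M' = (d − m_3, d − m_2, 2d − m_1 − m_2 − m_3, d − m_1, m_4, …, m_8). Then all entries of M' are nonnegative, the three largest entries of M' are d − m_3, d − m_2, d − m_1, their sum equals δ', and the sum of any three entries of M' (taken at distinct positions) is at most δ'; in particular this transformed plane system is in standard form. -/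
set_option maxHeartbeats 1000000 in
/-- If `L_3(d, m_1, …, m_8)` is in standard form with `d ≥ m_1` but `d < m_2 + m_3`, then
the plane system obtained from `L_2(2d - m_1, (d-m_1)^2, m_2, …, m_8)` by the quadratic
Cremona transformation based at the multiplicities `d - m_1, m_2, m_3`, namely the system
with degree `δ' = 3d - m_1 - m_2 - m_3` and multiplicities
`(d - m_3, d - m_2, 2d - m_1 - m_2 - m_3, d - m_1, m_4, …, m_8)`, is in standard form:
all multiplicities are nonnegative, the three largest are `d - m_3 ≥ d - m_2 ≥ d - m_1`,
their sum equals `δ'`, and the sum of any three (at distinct positions) is at most `δ'`. -/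
theorem cremona_plane_system_standard
    (d m1 m2 m3 m4 m5 m6 m7 m8 : ℤ)
    (hd : d ≥ m1) (h12 : m1 ≥ m2) (h23 : m2 ≥ m3) (h34 : m3 ≥ m4) (h45 : m4 ≥ m5)
    (h56 : m5 ≥ m6) (h67 : m6 ≥ m7) (h78 : m7 ≥ m8) (h8 : m8 ≥ 0)
    (hstd : 2 * d ≥ m1 + m2 + m3 + m4)
    (h23d : d < m2 + m3) :
    let δ' : ℤ := 3 * d - m1 - m2 - m3
    let M : Fin 9 → ℤ :=
      ![d - m3, d - m2, 2 * d - m1 - m2 - m3, d - m1, m4, m5, m6, m7, m8]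
    (∀ j : Fin 9, 0 ≤ M j) ∧
    (d - m1 ≤ d - m2 ∧ d - m2 ≤ d - m3) ∧
    (∀ j : Fin 9, j ≠ 0 → j ≠ 1 → j ≠ 3 → M j ≤ d - m1) ∧
    (d - m3) + (d - m2) + (d - m1) = δ' ∧
    (∀ i j l : Fin 9, i ≠ j → i ≠ l → j ≠ l → M i + M j + M l ≤ δ') := by
  intro δ' M
  have e0 : M 0 = d - m3 := rfl
  have e1 : M 1 = d - m2 := rfl
  have e2 : M 2 = 2 * d - m1 - m2 - m3 := rfl
  have e3 : M 3 = d - m1 := rfl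
  have e4 : M 4 = m4 := rfl
  have e5 : M 5 = m5 := rfl
  have e6 : M 6 = m6 := rfl
  have e7 : M 7 = m7 := rfl
  have e8 : M 8 = m8 := rfl
  refine ⟨?_, ⟨by omega, by omega⟩, ?_, by omega, ?_⟩
  · intro j
    fin_cases j <;>
      simp only [Fin.zero_eta, Fin.mk_one, Fin.reduceFinMk, e0, e1, e2, e3, e4, e5, e6, e7, e8] <;>
      omega
  · intro j h0 h1 h3
    fin_cases j <;>
      simp only [Fin.zero_eta, Fin.mk_one, Fin.reduceFinMk, e0, e1, e2, e3, e4, e5, e6, e7, e8] <;>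
      first
        | omega
        | simp_all
  · have B0 : ∀ k : Fin 9, M k ≤ d - m3 := by
      intro k
      fin_cases k <;>
        simp only [Fin.zero_eta, Fin.mk_one, Fin.reduceFinMk, e0, e1, e2, e3, e4, e5, e6, e7, e8] <;>
        omega
    have B1 : ∀ k : Fin 9, k ≠ 0 → M k ≤ d - m2 := by
      intro k hk
      fin_cases k <;>
        simp only [Fin.zero_eta, Fin.mk_one, Fin.reduceFinMk, e0, e1, e2, e3, e4, e5, e6, e7, e8] <;>
        first
          | omega
          | simp_all
    have B2 : ∀ k : Fin 9, k ≠ 0 → k ≠ 1 → M k ≤ d - m1 := by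
      intro k hk0 hk1
      fin_cases k <;>
        simp only [Fin.zero_eta, Fin.mk_one, Fin.reduceFinMk, e0, e1, e2, e3, e4, e5, e6, e7, e8] <;>
        first
          | omega
          | simp_all
    intro i j l hij hil hjl
    have key : ∀ a b c : Fin 9, b ≠ 0 → c ≠ 0 → c ≠ 1 → M a + M b + M c ≤ δ' := by
      intro a b c hb0 hc0 hc1
      have h1 := B0 a
      have h2 := B1 b hb0
      have h3 := B2 c hc0 hc1
      omega
    by_cases hi0 : i = 0 <;> by_cases hj0 : j = 0 <;> by_cases hl0 : l = 0 <;>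
      by_cases hi1 : i = 1 <;> by_cases hj1 : j = 1 <;> by_cases hl1 : l = 1 <;>
      first
        | (have h := key i j l (by first | assumption | (subst_vars; decide)) (by first | assumption | (subst_vars; decide)) (by first | assumption | (subst_vars; decide)); omega)
        | (have h := key i l j (by first | assumption | (subst_vars; decide)) (by first | assumption | (subst_vars; decide)) (by first | assumption | (subst_vars; decide)); omega)
        | (have h := key j i l (by first | assumption | (subst_vars; decide)) (by first | assumption | (subst_vars; decide)) (by first | assumption | (subst_vars; decide)); omega)
        | (have h := key j l i (by first | assumption | (subst_vars; decide)) (by first | assumption | (subst_vars; decide)) (by first | assumption | (subst_vars; decide)); omega)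
        | (have h := key l i j (by first | assumption | (subst_vars; decide)) (by first | assumption | (subst_vars; decide)) (by first | assumption | (subst_vars; decide)); omega)
        | (have h := key l j i (by first | assumption | (subst_vars; decide)) (by first | assumption | (subst_vars; decide)) (by first | assumption | (subst_vars; decide)); omega)
        | (subst_vars; simp_all)
end
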